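/- (Gaussian reduction of the Asian-type contour integral to a Black–Scholes-type formula.) Let m ∈ ℝ, v > 0, w ∈ {−1, 1}, and let ω satisfy ω > 1 if w = 1 and ω > 0 if w = −1. Then −(1/(2π)) ∫_{Im ξ = −wω} exp(i ξ m − v² ξ²/2) / (ξ(ξ + i)) dξ = w ( e^{m + v²/2} Φ(w(m + v²)/v) − Φ(w m / v) ). In particular, with m = ln(S/K) + (1/2)(r − σ²/2)(T − T′) and v² = σ²(T − T′)(2M − 1)/(6M) (for S, K > 0, σ > 0, r ∈ ℝ, T > T′, M ≥ 1), the discretely monitored geometric Asian price integral −(K e^{−r(T−t)}/(2π)) ∫_{Im ξ = −wω} e^{iξm − v²ξ²/2}/(ξ(ξ+i)) dξ equals w ( S e^{−β} Φ(w D⁺) − K e^{−r(T−t)} Φ(w D⁻) ), where D⁻ = m/v, D⁺ = D⁻ + v and β = r(T − t) − (r − σ²/2 + σ²(2M−1)/(6M))(T − T′)/2. -/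

import Mathlib

open MeasureTheory Real Complex

/-- The standard normal cumulative distribution function. -/
noncomputable def stdNormalCDF (x : ℝ) : ℝ :=
  ∫ t in Set.Iic x, (Real.sqrt (2 * Real.pi))⁻¹ * Real.exp (-t ^ 2 / 2)

/-- The Asian-type contour integral `∫_{Im ξ = −wω} e^{iξm − v²ξ²/2}/(ξ(ξ+i)) dξ`. -/
noncomputable def asianIntegral (w ω m v : ℝ) : ℂ :=
  ∫ u : ℝ, Complex.exp (Complex.I * ((u : ℂ) - (w * ω : ℝ) * Complex.I) * (m : ℂ)
      - (v : ℂ) ^ 2 * ((u : ℂ) - (w * ω : ℝ) * Complex.I) ^ 2 / 2)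
    / (((u : ℂ) - (w * ω : ℝ) * Complex.I) *
        (((u : ℂ) - (w * ω : ℝ) * Complex.I) + Complex.I))

open Set

/-!
Split `1 / (ξ (ξ + i))` into the partial fractions `i / (ξ + i) - i / ξ`. On a line where
`w · Im (ξ + ic) < 0` each pole is a Laplace transform,
`(ξ + ic)⁻¹ = w i ∫₀^∞ e^{-w i (ξ + ic) t} dt`. After Fubini, the integral over the line is that
of the Gaussian characteristic function `e^{iξ(m - wt) - v²ξ²/2}`, namely
`√(2π)/v · e^{-(m - wt)²/(2v²)}`, and the remaining integral over `t > 0` is a shifted Gaussian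
tail, i.e. a value of `Φ`.
-/

lemma integral_Ioi_comp_sub_right {E : Type*} [NormedAddCommGroup E] [NormedSpace ℝ E]
    (f : ℝ → E) (c d : ℝ) : ∫ x in Ioi c, f (x - d) = ∫ x in Ioi (c - d), f x := by
  have h := (measurePreserving_sub_right volume d).setIntegral_preimage_emb
    (measurableEmbedding_subRight d) f (Ioi (c - d))
  rwa [show (fun x : ℝ => x - d) ⁻¹' Ioi (c - d) = Ioi c by ext; simp] at h

lemma integral_Iic_exp_neg_sq_div_two (x : ℝ) :
    ∫ t in Iic x, Real.exp (-t ^ 2 / 2) = √(2 * π) * stdNormalCDF x := by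
  rw [stdNormalCDF, integral_const_mul, mul_inv_cancel_left₀ (by positivity)]

lemma integral_Ioi_exp_neg_sq_sub {v : ℝ} (hv : 0 < v) (a : ℝ) :
    ∫ t in Ioi (0 : ℝ), Real.exp (-(t - a) ^ 2 / (2 * v ^ 2))
      = v * √(2 * π) * stdNormalCDF (a / v) := by
  have hscale := integral_comp_mul_left_Ioi' (fun t => Real.exp (-(t - a) ^ 2 / (2 * v ^ 2))) 0 hv
  have hstd (s : ℝ) :
      Real.exp (-(v * s - a) ^ 2 / (2 * v ^ 2)) = Real.exp (-(s - a / v) ^ 2 / 2) := by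
    congr 1
    field_simp
  simp only [mul_zero, smul_eq_mul, hstd] at hscale
  rw [← hscale, integral_Ioi_comp_sub_right (fun s => Real.exp (-s ^ 2 / 2)), zero_sub,
    ← integral_comp_neg_Iic]
  simp only [neg_sq]
  rw [integral_Iic_exp_neg_sq_div_two]
  ring

lemma integral_Ioi_exp_mul_exp_neg_sq_sub {v : ℝ} (hv : 0 < v) (a b : ℝ) :
    ∫ t in Ioi (0 : ℝ), Real.exp (a * t) * Real.exp (-(b - t) ^ 2 / (2 * v ^ 2))
      = Real.exp (a * b + a ^ 2 * v ^ 2 / 2)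
          * (v * √(2 * π) * stdNormalCDF ((b + a * v ^ 2) / v)) := by
  have hsquare (t : ℝ) : Real.exp (a * t) * Real.exp (-(b - t) ^ 2 / (2 * v ^ 2))
      = Real.exp (a * b + a ^ 2 * v ^ 2 / 2)
          * Real.exp (-(t - (b + a * v ^ 2)) ^ 2 / (2 * v ^ 2)) := by
    rw [← Real.exp_add, ← Real.exp_add]
    congr 1
    field_simp
    ring
  simp_rw [hsquare]
  rw [integral_const_mul, integral_Ioi_exp_neg_sq_sub hv]

lemma inv_eq_integral_Ioi_cexp (w : ℝ) {z : ℂ} (h : w * z.im < 0) :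
    z⁻¹ = w * I * ∫ t in Ioi (0 : ℝ), cexp (-(w * I * z) * t) := by
  have hre : (-(w * I * z)).re < 0 := by simpa using h
  have hw : (w : ℂ) ≠ 0 := by rintro ⟨⟩; simp at h
  have hz : z ≠ 0 := by rintro rfl; simp at h
  rw [integral_exp_mul_complex_Ioi hre]
  field_simp
  simp

lemma norm_inv_add_mul_I_le {y : ℝ} (hy : y ≠ 0) (u : ℝ) : ‖((u : ℂ) + y * I)⁻¹‖ ≤ |y|⁻¹ := by
  rw [norm_inv]
  gcongr
  simpa using abs_im_le_norm ((u : ℂ) + y * I)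

lemma div_mul_add_I_eq_sub {ξ : ℂ} (h₀ : ξ ≠ 0) (h₁ : ξ + I ≠ 0) (a : ℂ) :
    a / (ξ * (ξ + I)) = I * (a / (ξ + I)) - I * (a / ξ) := by
  field_simp
  ring_nf
  rw [I_sq]
  ring

noncomputable def gaussianCharExponent (m v : ℝ) (ξ : ℂ) : ℂ :=
  I * ξ * m - (v : ℂ) ^ 2 * ξ ^ 2 / 2

lemma gaussianCharExponent_add_mul_I (m v ρ u : ℝ) :
    gaussianCharExponent m v (u + ρ * I)
      = -((v : ℂ) ^ 2 / 2) * (u : ℂ) ^ 2 + I * (m - v ^ 2 * ρ : ℝ) * u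
        + (v ^ 2 * ρ ^ 2 / 2 - ρ * m : ℝ) := by
  simp only [gaussianCharExponent]
  push_cast
  ring_nf
  rw [I_sq]
  ring

lemma integrable_cexp_gaussianCharExponent {v : ℝ} (hv : 0 < v) (m ρ : ℝ) :
    Integrable fun u : ℝ => cexp (gaussianCharExponent m v (u + ρ * I)) := by
  simp_rw [gaussianCharExponent_add_mul_I]
  exact integrable_cexp_quadratic (by norm_cast; positivity) _ _

lemma integral_cexp_gaussianCharExponent {v : ℝ} (hv : 0 < v) (m ρ : ℝ) :
    ∫ u : ℝ, cexp (gaussianCharExponent m v (u + ρ * I))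
      = (√(2 * π) / v * Real.exp (-m ^ 2 / (2 * v ^ 2)) : ℝ) := by
  have hb : (-((v : ℂ) ^ 2 / 2)).re < 0 := by norm_cast; simp; positivity
  simp_rw [gaussianCharExponent_add_mul_I]
  rw [integral_cexp_quadratic hb]
  have hv' : (v : ℂ) ≠ 0 := by exact_mod_cast hv.ne'
  have hsqrt : ((π : ℂ) / -(-((v : ℂ) ^ 2 / 2))) ^ (1 / 2 : ℂ) = (√(2 * π) / v : ℝ) := by
    rw [show (π : ℂ) / -(-((v : ℂ) ^ 2 / 2)) = (2 * π / v ^ 2 : ℝ) by push_cast; ring,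
      ← ofReal_ofNat, ← ofReal_one, ← ofReal_div, ← ofReal_cpow (by positivity),
      ← Real.sqrt_eq_rpow, Real.sqrt_div' _ (by positivity), Real.sqrt_sq hv.le]
  rw [hsqrt, ofReal_mul, ofReal_exp]
  congr 2
  push_cast
  field_simp
  ring_nf
  rw [I_sq]
  ring

lemma cexp_gaussianCharExponent_mul_cexp (m v w c t : ℝ) (ξ : ℂ) :
    cexp (gaussianCharExponent m v ξ) * cexp (-(w * I * (ξ + c * I)) * t)
      = Real.exp (w * c * t) * cexp (gaussianCharExponent (m - w * t) v ξ) := by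
  rw [ofReal_exp, ← Complex.exp_add, ← Complex.exp_add]
  congr 1
  simp only [gaussianCharExponent]
  push_cast
  ring_nf
  rw [I_sq]
  ring

lemma integrable_cexp_gaussianCharExponent_mul_cexp {v : ℝ} (hv : 0 < v) (m ρ w c : ℝ)
    (h : w * (ρ + c) < 0) :
    Integrable (Function.uncurry fun (u t : ℝ) =>
        cexp (gaussianCharExponent m v (u + ρ * I)) * cexp (-(w * I * (u + ρ * I + c * I)) * t))
      (volume.prod (volume.restrict (Ioi 0))) := by
  have hexp : IntegrableOn (fun t : ℝ => Real.exp (w * (ρ + c) * t)) (Ioi 0) := by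
    simpa using exp_neg_integrableOn_Ioi 0 (neg_pos.2 h)
  refine Integrable.mono' ((integrable_cexp_gaussianCharExponent hv m ρ).norm.mul_prod hexp)
    (Continuous.aestronglyMeasurable ?_) (ae_of_all _ fun p => le_of_eq ?_)
  · simp only [gaussianCharExponent]
    fun_prop
  · obtain ⟨u, t⟩ := p
    simp only [Function.uncurry_apply_pair, norm_mul, Complex.norm_exp]
    congr 2
    simp

lemma integrable_cexp_gaussianCharExponent_div {v : ℝ} (hv : 0 < v) (m ρ c : ℝ)
    (h : ρ + c ≠ 0) :
    Integrable fun u : ℝ =>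
      cexp (gaussianCharExponent m v (u + ρ * I)) / (u + ρ * I + c * I) := by
  have hden (u : ℝ) : (u : ℂ) + ρ * I + c * I = u + (ρ + c : ℝ) * I := by push_cast; ring
  simp_rw [div_eq_mul_inv, hden]
  exact (integrable_cexp_gaussianCharExponent hv m ρ).mul_bdd (by fun_prop)
    (ae_of_all _ (norm_inv_add_mul_I_le h))

lemma integral_cexp_gaussianCharExponent_div {w : ℝ} (hw : w ^ 2 = 1) {v : ℝ} (hv : 0 < v)
    (m ρ c : ℝ) (h : w * (ρ + c) < 0) :
    ∫ u : ℝ, cexp (gaussianCharExponent m v (u + ρ * I)) / (u + ρ * I + c * I)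
      = 2 * π * w * I * (Real.exp (c * m + c ^ 2 * v ^ 2 / 2)
          * stdNormalCDF (w * (m + c * v ^ 2) / v) : ℝ) := by
  have hlaplace (u : ℝ) : cexp (gaussianCharExponent m v (u + ρ * I)) / (u + ρ * I + c * I)
      = w * I * ∫ t in Ioi (0 : ℝ),
          cexp (gaussianCharExponent m v (u + ρ * I))
            * cexp (-(w * I * (u + ρ * I + c * I)) * t) := by
    rw [integral_const_mul, div_eq_mul_inv, inv_eq_integral_Ioi_cexp w (by simpa using h)]
    ring
  have hgauss (t : ℝ) : ∫ u : ℝ,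
      cexp (gaussianCharExponent m v (u + ρ * I)) * cexp (-(w * I * (u + ρ * I + c * I)) * t)
        = (Real.exp (w * c * t) * Real.exp (-(w * m - t) ^ 2 / (2 * v ^ 2))
            * (√(2 * π) / v) : ℝ) := by
    simp_rw [cexp_gaussianCharExponent_mul_cexp]
    rw [integral_const_mul, integral_cexp_gaussianCharExponent hv]
    -- since `w ^ 2 = 1`, both signs of `w` lead to the same Gaussian tail in `t`
    have hsq : (m - w * t) ^ 2 = (w * m - t) ^ 2 := by
      linear_combination (t ^ 2 - m ^ 2) * hw
    push_cast [hsq]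
    ring
  simp_rw [hlaplace]
  rw [integral_const_mul, integral_integral_swap
    (integrable_cexp_gaussianCharExponent_mul_cexp hv m ρ w c h)]
  simp_rw [hgauss]
  rw [integral_complex_ofReal, integral_mul_const, integral_Ioi_exp_mul_exp_neg_sq_sub hv]
  have hexp : w * c * (w * m) + (w * c) ^ 2 * v ^ 2 / 2 = c * m + c ^ 2 * v ^ 2 / 2 := by
    linear_combination (c * m + c ^ 2 * v ^ 2 / 2) * hw
  have harg : (w * m + w * c * v ^ 2) / v = w * (m + c * v ^ 2) / v := by ring
  have hconst (E Φ : ℝ) : E * (v * √(2 * π) * Φ) * (√(2 * π) / v) = 2 * π * (E * Φ) := by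
    field_simp
    rw [Real.sq_sqrt (by positivity)]
    ring
  rw [hexp, harg, hconst]
  push_cast
  ring

theorem neg_one_div_two_pi_mul_asianIntegral {w : ℝ} (hw : w ^ 2 = 1) {ω : ℝ} (hω₀ : 0 < ω)
    (hωw : w < ω) (m : ℝ) {v : ℝ} (hv : 0 < v) :
    -(1 / (2 * π)) * asianIntegral w ω m v
      = w * (Real.exp (m + v ^ 2 / 2) * stdNormalCDF (w * (m + v ^ 2) / v)
          - stdNormalCDF (w * m / v)) := by
  set ρ := -(w * ω)
  have hpole₀ : w * (ρ + 0) < 0 := by linear_combination (-ω) * hw + hω₀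
  have hpole₁ : w * (ρ + 1) < 0 := by linear_combination (-ω) * hw + hωw
  have hξ (u : ℝ) : (u : ℂ) - (w * ω : ℝ) * I = u + ρ * I := by simp [ρ]; ring
  have hne₀ : ρ + 0 ≠ 0 := right_ne_zero_of_mul hpole₀.ne
  have hne₁ : ρ + 1 ≠ 0 := right_ne_zero_of_mul hpole₁.ne
  have hden (c : ℝ) (hc : ρ + c ≠ 0) (u : ℝ) : (u : ℂ) + ρ * I + c * I ≠ 0 := fun h0 =>
    hc (by simpa using congrArg Complex.im h0)
  have hsplit (u : ℝ) :
      cexp (I * ((u : ℂ) - (w * ω : ℝ) * I) * m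
            - (v : ℂ) ^ 2 * ((u : ℂ) - (w * ω : ℝ) * I) ^ 2 / 2)
          / (((u : ℂ) - (w * ω : ℝ) * I) * (((u : ℂ) - (w * ω : ℝ) * I) + I))
        = I * (cexp (gaussianCharExponent m v (u + ρ * I)) / (u + ρ * I + (1 : ℝ) * I))
          - I * (cexp (gaussianCharExponent m v (u + ρ * I)) / (u + ρ * I + (0 : ℝ) * I)) := by
    have h₀ := hden 0 hne₀ u
    have h₁ := hden 1 hne₁ u
    simp only [ofReal_zero, ofReal_one, zero_mul, add_zero, one_mul] at h₀ h₁ ⊢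
    rw [hξ, ← div_mul_add_I_eq_sub h₀ h₁]
    rfl
  rw [asianIntegral]
  simp_rw [hsplit]
  rw [integral_sub ((integrable_cexp_gaussianCharExponent_div hv m ρ 1 hne₁).const_mul I)
      ((integrable_cexp_gaussianCharExponent_div hv m ρ 0 hne₀).const_mul I),
    integral_const_mul, integral_const_mul,
    integral_cexp_gaussianCharExponent_div hw hv m ρ 1 hpole₁,
    integral_cexp_gaussianCharExponent_div hw hv m ρ 0 hpole₀]
  have hπ : (π : ℂ) ≠ 0 := by exact_mod_cast pi_ne_zero
  simp only [one_mul, one_pow, zero_mul, zero_pow two_ne_zero, zero_div, add_zero,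
    Real.exp_zero]
  push_cast
  field_simp
  ring_nf
  rw [I_sq]
  ring

lemma mul_exp_mul_exp_log_div_add {S K : ℝ} (hS : 0 < S) (hK : 0 < K) (a b : ℝ) :
    K * Real.exp a * Real.exp (Real.log (S / K) + b) = S * Real.exp (a + b) := by
  rw [Real.exp_add, Real.exp_log (div_pos hS hK), Real.exp_add]
  field_simp

theorem neg_mul_div_two_pi_mul_asianIntegral {w : ℝ} (hw : w ^ 2 = 1) {ω : ℝ} (hω₀ : 0 < ω)
    (hωw : w < ω) (m : ℝ) {v : ℝ} (hv : 0 < v) {A B : ℝ}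
    (hAB : A * Real.exp (m + v ^ 2 / 2) = B) :
    -((A : ℂ) / (2 * π)) * asianIntegral w ω m v
      = w * (B * stdNormalCDF (w * (m / v + v)) - A * stdNormalCDF (w * (m / v))) := by
  have harg : w * (m + v ^ 2) / v = w * (m / v + v) := by field_simp
  rw [div_eq_mul_one_div (A : ℂ), neg_mul_eq_mul_neg, mul_assoc,
    neg_one_div_two_pi_mul_asianIntegral hw hω₀ hωw m hv, harg, mul_div_assoc, ← hAB]
  push_cast
  ring

/-- Gaussian reduction of the Asian-type contour integral to a Black–Scholes-type
formula, together with its specialization to the discretely monitored geometric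
Asian price integral. -/
theorem stmt14 (w ω : ℝ) (hw : w = 1 ∨ w = -1)
    (hω₁ : w = 1 → 1 < ω) (hω₂ : w = -1 → 0 < ω) :
    (∀ m v : ℝ, 0 < v →
      -(1 / (2 * Real.pi)) * asianIntegral w ω m v
        = (w : ℂ) * (Real.exp (m + v ^ 2 / 2) * stdNormalCDF (w * (m + v ^ 2) / v)
            - stdNormalCDF (w * m / v))) ∧
    (∀ S K σ r T T' t : ℝ, ∀ M : ℕ, 0 < S → 0 < K → 0 < σ → T' < T → 1 ≤ M →
      -((K : ℂ) * Real.exp (-r * (T - t)) / (2 * Real.pi)) *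
          asianIntegral w ω (Real.log (S / K) + (1 / 2) * (r - σ ^ 2 / 2) * (T - T'))
            (Real.sqrt (σ ^ 2 * (T - T') * (2 * (M : ℝ) - 1) / (6 * (M : ℝ))))
        = (w : ℂ) *
            ((S : ℂ) * Real.exp (-(r * (T - t)
                  - (r - σ ^ 2 / 2 + σ ^ 2 * (2 * (M : ℝ) - 1) / (6 * (M : ℝ)))
                    * (T - T') / 2)) *
                stdNormalCDF (w * ((Real.log (S / K) + (1 / 2) * (r - σ ^ 2 / 2) * (T - T'))
                    / Real.sqrt (σ ^ 2 * (T - T') * (2 * (M : ℝ) - 1) / (6 * (M : ℝ)))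
                  + Real.sqrt (σ ^ 2 * (T - T') * (2 * (M : ℝ) - 1) / (6 * (M : ℝ)))))
              - (K : ℂ) * Real.exp (-r * (T - t)) *
                stdNormalCDF (w * ((Real.log (S / K) + (1 / 2) * (r - σ ^ 2 / 2) * (T - T'))
                    / Real.sqrt (σ ^ 2 * (T - T') * (2 * (M : ℝ) - 1) / (6 * (M : ℝ))))))) := by
  obtain ⟨hw2, hω₀, hωw⟩ : w ^ 2 = 1 ∧ 0 < ω ∧ w < ω := by
    rcases hw with rfl | rfl
    · exact ⟨by norm_num, by linarith [hω₁ rfl], hω₁ rfl⟩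
    · exact ⟨by norm_num, hω₂ rfl, by linarith [hω₂ rfl]⟩
  refine ⟨fun m v hv => neg_one_div_two_pi_mul_asianIntegral hw2 hω₀ hωw m hv, ?_⟩
  intro S K σ r T T' t M hS hK hσ hT hM
  have hM' : (0 : ℝ) < 2 * M - 1 := by
    have : (1 : ℝ) ≤ M := by exact_mod_cast hM
    linarith
  have hX : 0 < σ ^ 2 * (T - T') * (2 * (M : ℝ) - 1) / (6 * (M : ℝ)) :=
    div_pos (mul_pos (mul_pos (by positivity) (sub_pos.2 hT)) hM') (by linarith)
  have h := neg_mul_div_two_pi_mul_asianIntegral hw2 hω₀ hωw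
    (Real.log (S / K) + (1 / 2) * (r - σ ^ 2 / 2) * (T - T')) (Real.sqrt_pos.2 hX)
    (A := K * Real.exp (-r * (T - t)))
    (B := S * Real.exp (-(r * (T - t)
      - (r - σ ^ 2 / 2 + σ ^ 2 * (2 * (M : ℝ) - 1) / (6 * (M : ℝ))) * (T - T') / 2)))
    (by rw [Real.sq_sqrt hX.le, add_assoc, mul_exp_mul_exp_log_div_add hS hK]; ring_nf)
  simpa only [ofReal_mul] using h
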